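/- Let n ≥ 1 and p ≥ 1 be natural numbers, m = ⌈n/p⌉, and let w : Fin n → ℝ be a nonincreasing sequence of nonnegative reals partitioned into m consecutive blocks B_1, ..., B_m where block B_i consists of indices (i−1)·p through min(i·p, n) − 1. Let λ_1, ..., λ_m be positive integers with Σ_{i=1}^{m} (λ_i − 1) ≤ D for some natural number D. Then Σ_{i=1}^{m} ( max_{j ∈ B_i} w_j + λ_i − 1 ) ≤ D + w_0 + (Σ_{j=0}^{n−1} w_j) / p. -/

import Mathlib

/-!
Since `w` is nonincreasing, the maximum of block `i` is its first entry `w (i * p)`, and for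
`i ≥ 1` this entry is at most every entry of the previous (full) block, hence at most that block's
average. Summing, the block maxima other than the first are bounded by `(∑ j, w j) / p`, and the
first is `w 0`; the drain terms `λ_i - 1` contribute at most `D`.
-/

open Finset

theorem AntitoneOn.csSup_image_Ico {α β : Type*} [Preorder α] [ConditionallyCompleteLattice β]
    {f : α → β} {a b : α} (hab : a < b) (hf : AntitoneOn f (Set.Ico a b)) :
    sSup (f '' Set.Ico a b) = f a :=
  (hf.map_isLeast (isLeast_Ico hab)).csSup_eq

theorem nsmul_sum_range_succ_mul_le_sum_range {M : Type*} [AddCommMonoid M] [PartialOrder M]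
    [IsOrderedAddMonoid M] {w : ℕ → M} {p k : ℕ} (hw : AntitoneOn w (Set.Iic (k * p))) :
    p • ∑ i ∈ range k, w ((i + 1) * p) ≤ ∑ j ∈ range (k * p), w j := by
  induction k with
  | zero => simp
  | succ k ih =>
    have hkp : k * p ≤ (k + 1) * p := Nat.mul_le_mul_right p k.le_succ
    have hblock : p • w ((k + 1) * p) ≤ ∑ j ∈ Ico (k * p) ((k + 1) * p), w j := by
      have hcard : #(Ico (k * p) ((k + 1) * p)) = p := by simp [Nat.card_Ico, add_mul]
      have := card_nsmul_le_sum (Ico (k * p) ((k + 1) * p)) w _ fun j hj =>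
        hw (mem_Ico.1 hj).2.le Set.self_mem_Iic (mem_Ico.1 hj).2.le
      rwa [hcard] at this
    rw [sum_range_succ, nsmul_add, ← sum_range_add_sum_Ico _ hkp]
    exact add_le_add (ih (hw.mono (Set.Iic_subset_Iic.2 hkp))) hblock

theorem sum_range_mul_le_add_sum_range_div {w : ℕ → ℝ} {n p m : ℕ} (hp : 0 < p) (hm : 0 < m)
    (hmn : (m - 1) * p < n) (hw : AntitoneOn w (Set.Iio n)) (hw₀ : ∀ j < n, 0 ≤ w j) :
    ∑ i ∈ range m, w (i * p) ≤ w 0 + (∑ j ∈ range n, w j) / p := by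
  obtain ⟨k, rfl⟩ := Nat.exists_eq_add_one_of_ne_zero hm.ne'
  rw [Nat.add_sub_cancel] at hmn
  have hheads : (p : ℝ) * ∑ i ∈ range k, w ((i + 1) * p) ≤ ∑ j ∈ range (k * p), w j := by
    rw [← nsmul_eq_mul]
    exact nsmul_sum_range_succ_mul_le_sum_range
      (hw.mono fun j hj => (Set.mem_Iic.1 hj).trans_lt hmn)
  have htail : ∑ j ∈ range (k * p), w j ≤ ∑ j ∈ range n, w j :=
    sum_le_sum_of_subset_of_nonneg (range_subset_range.2 hmn.le)
      fun j hj _ => hw₀ j (mem_range.1 hj)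
  rw [sum_range_succ', zero_mul, add_comm]
  gcongr
  rw [le_div_iff₀ (by exact_mod_cast hp), mul_comm]
  exact hheads.trans htail

/-- quantitative core of the scheduling theorem for graphs
of element-wise and downsampler nodes. Let `n, p ≥ 1`, `m = ⌈n/p⌉`, and let
`w 0 ≥ w 1 ≥ ⋯ ≥ w (n−1) ≥ 0` be a nonincreasing sequence of nonnegative
reals partitioned into `m` consecutive blocks, block `i` (`0 ≤ i < m`)
consisting of indices `i·p, …, min((i+1)·p, n) − 1`. Let `λ_0, …, λ_{m−1}`
be positive integers with `Σ_i (λ_i − 1) ≤ D`. Then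
`Σ_i (max_{j ∈ B_i} w j + λ_i − 1) ≤ D + w 0 + (Σ_j w j) / p`
(the block maximum expressed as `sSup` of the image, a finite nonempty set
of reals). -/
theorem downsampler_schedule_time_bound
    (n p : ℕ) (hn : 1 ≤ n) (hp : 1 ≤ p)
    (m : ℕ) (hm : m = (n + p - 1) / p)
    (w : ℕ → ℝ)
    (hnonneg : ∀ j < n, 0 ≤ w j)
    (hmono : ∀ i j, i ≤ j → j < n → w j ≤ w i)
    (lam : ℕ → ℕ) (hlam : ∀ i < m, 1 ≤ lam i)
    (D : ℕ) (hD : ∑ i ∈ Finset.range m, (lam i - 1) ≤ D) :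
    ∑ i ∈ Finset.range m,
        (sSup (w '' Set.Ico (i * p) (min ((i + 1) * p) n)) + (lam i : ℝ) - 1)
      ≤ (D : ℝ) + w 0 + (∑ j ∈ Finset.range n, w j) / p := by
  have hw : AntitoneOn w (Set.Iio n) := fun i _ j hj hij => hmono i j hij hj
  have hblock : ∀ i, i < m ↔ i * p < n := fun i => by
    rw [hm, Nat.lt_div_iff_mul_lt hp]
    omega
  have hmax : ∀ i < m, sSup (w '' Set.Ico (i * p) (min ((i + 1) * p) n)) = w (i * p) :=
    fun i hi => AntitoneOn.csSup_image_Ico (lt_min (by rw [add_mul]; omega) ((hblock i).1 hi))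
      (hw.mono fun j hj => hj.2.trans_le (min_le_right _ _))
  have hm0 : 0 < m := (hblock 0).2 (by rwa [zero_mul])
  calc ∑ i ∈ range m, (sSup (w '' Set.Ico (i * p) (min ((i + 1) * p) n)) + (lam i : ℝ) - 1)
      = ∑ i ∈ range m, w (i * p) + ((∑ i ∈ range m, (lam i - 1) : ℕ) : ℝ) := by
        rw [Nat.cast_sum, ← sum_add_distrib]
        refine sum_congr rfl fun i hi => ?_
        rw [hmax i (mem_range.1 hi), Nat.cast_sub (hlam i (mem_range.1 hi))]
        push_cast
        ring
    _ ≤ w 0 + (∑ j ∈ range n, w j) / p + D :=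
        add_le_add (sum_range_mul_le_add_sum_range_div hp hm0 ((hblock _).1 (by omega)) hw hnonneg)
          (by exact_mod_cast hD)
    _ = D + w 0 + (∑ j ∈ range n, w j) / p := by ring
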